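/- With the same RIFS setup, the typical lower box dimension of the random attractor is infimal: the set $\{\omega \in \Omega : \underline{\dim}_B F_\omega = \inf_{u \in \Omega} \underline{\dim}_B F_u\}$ is residual in $(\Omega, d_\Omega)$. -/

import Mathlib

/-
Let `I = ⨅ u, dim F_u` be finite and `dim F_v < I + ε`. Since `F_ω` is the union of
`∏_{i<l} m(ω i)` images of `F_{σ^l ω}` under 1-Lipschitz maps, prepending a word of length `l` to
`v` changes covering numbers and scales only by bounded factors, which are invisible at logarithmic
scale; and every `ω'` sharing the first `k` symbols of `ω` has `F_ω'` in the
`C^k diam K`-neighbourhood of `F_ω`. So, for each `ε` and `η`, the sequences having a cylinder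
neighbourhood on which the covering ratio at some common scale `δ < η` is below `I + ε` form a dense
open set; on the intersection of countably many of them the lower box dimension is at most `I`.
-/

open Metric MeasureTheory Filter Set
open scoped ENNReal NNReal

/-- `N_δ(F)`: the smallest number of open sets of diameter at most `δ` needed to cover `F`. -/
noncomputable def coverNum {K : Type*} [MetricSpace K] (F : Set K) (δ : ℝ) : ℝ≥0∞ :=
  ⨅ (t : Finset (Set K)) (_ : ∀ U ∈ t, IsOpen U ∧ Metric.diam U ≤ δ) (_ : F ⊆ ⋃ U ∈ t, U),
    (t.card : ℝ≥0∞)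

/-- Lower box(-counting) dimension. -/
noncomputable def lowerBoxDim {K : Type*} [MetricSpace K] (F : Set K) : ℝ≥0∞ :=
  Filter.liminf
    (fun δ : ℝ => ENNReal.ofReal (Real.log (coverNum F δ).toReal / -Real.log δ))
    (nhdsWithin 0 (Set.Ioi 0))

/-- Upper box(-counting) dimension. -/
noncomputable def upperBoxDim {K : Type*} [MetricSpace K] (F : Set K) : ℝ≥0∞ :=
  Filter.limsup
    (fun δ : ℝ => ENNReal.ofReal (Real.log (coverNum F δ).toReal / -Real.log δ))
    (nhdsWithin 0 (Set.Ioi 0))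

/-- The level-`k` approximation of the random attractor: the union over all length-`k`
words `(i₁,…,i_k)` with `i_l ∈ 𝓘_{ω_l}` of `S_{ω₁,i₁} ∘ ⋯ ∘ S_{ω_k,i_k}(K₀)`. -/
def levelSets {X : Type*} {N : ℕ} (m : Fin N → ℕ) (S : ∀ i, Fin (m i) → X → X) (K₀ : Set X) :
    (ℕ → Fin N) → ℕ → Set X
  | _, 0 => K₀
  | ω, k+1 => ⋃ j : Fin (m (ω 0)), S (ω 0) j '' levelSets m S K₀ (fun n => ω (n+1)) k

/-- The random attractor `F_ω = ⋂_k ⋃_{i₁,…,i_k} S_{ω₁,i₁} ∘ ⋯ ∘ S_{ω_k,i_k}(K₀)`. -/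
def attractorOf {X : Type*} {N : ℕ} (m : Fin N → ℕ) (S : ∀ i, Fin (m i) → X → X)
    (K₀ : Set X) (ω : ℕ → Fin N) : Set X :=
  ⋂ k, levelSets m S K₀ ω k

/-- `φ` is a bi-Lipschitz contraction. -/
def IsBiLipContraction {K : Type*} [MetricSpace K] (φ : K → K) : Prop :=
  ∃ c C : ℝ, 0 < c ∧ C < 1 ∧
    ∀ x y, c * dist x y ≤ dist (φ x) (φ y) ∧ dist (φ x) (φ y) ≤ C * dist x y

open scoped Topology
open PiNat Bornology

section CoverNum

variable {K : Type*} [MetricSpace K] {E F : Set K} {δ δ' : ℝ}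

lemma coverNum_le_card {t : Finset (Set K)} (ht : ∀ U ∈ t, IsOpen U ∧ diam U ≤ δ)
    (hF : F ⊆ ⋃ U ∈ t, U) : coverNum F δ ≤ t.card :=
  iInf₂_le_of_le t ht (iInf_le _ hF)

lemma le_coverNum {x : ℝ≥0∞}
    (h : ∀ t : Finset (Set K), (∀ U ∈ t, IsOpen U ∧ diam U ≤ δ) → F ⊆ ⋃ U ∈ t, U → x ≤ t.card) :
    x ≤ coverNum F δ :=
  le_iInf₂ fun t ht => le_iInf (h t ht)

lemma one_le_coverNum (hF : F.Nonempty) (δ : ℝ) : 1 ≤ coverNum F δ := by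
  refine le_coverNum fun t _ htF => ?_
  obtain ⟨U, hU, -⟩ := mem_iUnion₂.mp (htF hF.some_mem)
  exact_mod_cast Finset.card_pos.mpr ⟨U, hU⟩

lemma coverNum_ne_top [CompactSpace K] (F : Set K) (hδ : 0 < δ) : coverNum F δ ≠ ⊤ := by
  classical
  obtain ⟨s, hs⟩ := isCompact_univ.elim_finite_subcover (fun x : K => ball x (δ / 3))
    (fun _ => isOpen_ball) fun x _ => mem_iUnion.mpr ⟨x, mem_ball_self (by positivity)⟩
  refine ne_top_of_le_ne_top (ENNReal.natCast_ne_top (s.image fun x => ball x (δ / 3)).card)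
    (coverNum_le_card ?_ ?_)
  · simp only [Finset.mem_image]
    rintro _ ⟨x, -, rfl⟩
    exact ⟨isOpen_ball, (diam_ball (by positivity)).trans (by linarith)⟩
  · intro x _
    obtain ⟨y, hy, hxy⟩ := mem_iUnion₂.mp (hs (mem_univ x))
    exact mem_iUnion₂.mpr ⟨_, Finset.mem_image_of_mem _ hy, hxy⟩

lemma coverNum_toReal_pos [CompactSpace K] (hF : F.Nonempty) (hδ : 0 < δ) :
    0 < (coverNum F δ).toReal :=
  ENNReal.toReal_pos (zero_lt_one.trans_le (one_le_coverNum hF δ)).ne' (coverNum_ne_top F hδ)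

lemma exists_card_eq_coverNum (h : coverNum F δ ≠ ⊤) :
    ∃ t : Finset (Set K), (∀ U ∈ t, IsOpen U ∧ diam U ≤ δ) ∧ F ⊆ (⋃ U ∈ t, U) ∧
      (t.card : ℝ≥0∞) = coverNum F δ := by
  let Cover := {t : Finset (Set K) // (∀ U ∈ t, IsOpen U ∧ diam U ≤ δ) ∧ F ⊆ ⋃ U ∈ t, U}
  have : Nonempty Cover := by
    by_contra hempty
    exact h (top_le_iff.mp (le_coverNum fun t ht hF => (hempty ⟨⟨t, ht, hF⟩⟩).elim))
  let t := Function.argmin (fun t : Cover => t.1.card)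
  refine ⟨t.1, t.2.1, t.2.2,
    le_antisymm (le_coverNum fun s hs hF => ?_) (coverNum_le_card t.2.1 t.2.2)⟩
  exact_mod_cast Function.argmin_le (fun t : Cover => t.1.card) ⟨s, hs, hF⟩

lemma coverNum_iUnion_le {ι : Type*} [Fintype ι] (A : ι → Set K) (δ : ℝ) :
    coverNum (⋃ i, A i) δ ≤ ∑ i, coverNum (A i) δ := by
  classical
  by_cases h : ∀ i, coverNum (A i) δ ≠ ⊤
  · choose t ht htA hcard using fun i => exists_card_eq_coverNum (h i)
    calc coverNum (⋃ i, A i) δ ≤ (Finset.univ.biUnion t).card := by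
          refine coverNum_le_card (by simpa using fun U i hU => ht i U hU) fun x hx => ?_
          obtain ⟨i, hxi⟩ := mem_iUnion.mp hx
          obtain ⟨U, hU, hxU⟩ := mem_iUnion₂.mp (htA i hxi)
          exact mem_iUnion₂.mpr ⟨U, Finset.mem_biUnion.mpr ⟨i, Finset.mem_univ i, hU⟩, hxU⟩
      _ ≤ ((∑ i, (t i).card : ℕ) : ℝ≥0∞) := by exact_mod_cast Finset.card_biUnion_le
      _ = ∑ i, coverNum (A i) δ := by simp only [Nat.cast_sum, hcard]
  · push Not at h
    obtain ⟨i, hi⟩ := h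
    exact le_top.trans_eq (ENNReal.sum_eq_top.mpr ⟨i, Finset.mem_univ i, hi⟩).symm

lemma coverNum_le_of_forall_cover (Φ : Set K → Set K)
    (hΦ : ∀ U, IsOpen U → diam U ≤ δ → IsOpen (Φ U) ∧ diam (Φ U) ≤ δ')
    (hcover : ∀ t : Finset (Set K), E ⊆ ⋃ U ∈ t, U → F ⊆ ⋃ U ∈ t, Φ U) :
    coverNum F δ' ≤ coverNum E δ := by
  classical
  refine le_coverNum fun t ht hE => ?_
  calc coverNum F δ' ≤ (t.image Φ).card := by
        refine coverNum_le_card ?_ ?_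
        · simp only [Finset.mem_image]
          rintro _ ⟨U, hU, rfl⟩
          exact hΦ U (ht U hU).1 (ht U hU).2
        · simpa using hcover t hE
    _ ≤ t.card := by exact_mod_cast Finset.card_image_le

lemma coverNum_le_of_subset_cthickening {r : ℝ} (hFE : F ⊆ cthickening r E) (hr : r < δ)
    (hδ : 0 < δ) : coverNum F (3 * δ) ≤ coverNum E δ := by
  refine coverNum_le_of_forall_cover (thickening δ) (fun U _ hU => ⟨isOpen_thickening, ?_⟩)
    fun t hE => ?_
  · linarith [diam_thickening_le U hδ.le]
  · calc F ⊆ thickening δ E := hFE.trans (cthickening_subset_thickening' hδ hr E)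
      _ ⊆ thickening δ (⋃ U ∈ t, U) := thickening_subset_of_subset δ hE
      _ = ⋃ U ∈ t, thickening δ U := by simp only [thickening_iUnion]

lemma coverNum_image_le [BoundedSpace K] {φ : K → K} (hφ : LipschitzWith 1 φ) (hδ : 0 < δ) :
    coverNum (φ '' E) (3 * δ) ≤ coverNum E δ := by
  refine coverNum_le_of_forall_cover (fun U => thickening δ (φ '' U))
    (fun U _ hU => ⟨isOpen_thickening, ?_⟩) fun t hE => ?_
  · have := hφ.diam_image_le U (IsBounded.all U)
    push_cast at this
    linarith [diam_thickening_le (φ '' U) hδ.le]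
  · calc φ '' E ⊆ φ '' ⋃ U ∈ t, U := image_mono hE
      _ = ⋃ U ∈ t, φ '' U := by simp only [image_iUnion]
      _ ⊆ ⋃ U ∈ t, thickening δ (φ '' U) := iUnion₂_mono fun U _ => self_subset_thickening hδ _

end CoverNum

lemma eventually_log_div_neg_log_le {W A b b' : ℝ} (hW : 0 < W) (hA : 0 < A) (hb : b < b') :
    ∀ᶠ δ in 𝓝[>] 0, ∀ x y : ℝ, 0 < x → x ≤ W * y → Real.log y / -Real.log δ ≤ b →
      Real.log x / -Real.log (A * δ) ≤ b' := by
  have hlarge : ∀ᶠ δ in 𝓝[>] (0 : ℝ), (Real.log W + b' * Real.log A) / (b' - b) ≤ -Real.log δ :=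
    (tendsto_neg_atBot_atTop.comp Real.tendsto_log_nhdsGT_zero).eventually_ge_atTop _
  filter_upwards [hlarge, Ioo_mem_nhdsGT (by positivity : (0 : ℝ) < min 1 A⁻¹)]
    with δ hδT ⟨hδ, hδ1⟩ x y hx hxy hy
  set T := -Real.log δ
  have hT : 0 < T := neg_pos.mpr (Real.log_neg hδ (hδ1.trans_le (min_le_left _ _)))
  have hAδ : Real.log (A * δ) < 0 := by
    refine Real.log_neg (by positivity) ?_
    calc A * δ < A * A⁻¹ := by gcongr; exact hδ1.trans_le (min_le_right _ _)
      _ = 1 := mul_inv_cancel₀ hA.ne'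
  have hy0 : 0 < y := pos_of_mul_pos_right (hx.trans_le hxy) hW.le
  have hlogy : Real.log y ≤ b * T := (div_le_iff₀ hT).mp hy
  have hlogx : Real.log x ≤ Real.log W + Real.log y := by
    rw [← Real.log_mul hW.ne' hy0.ne']
    exact Real.log_le_log hx hxy
  have hWA : Real.log W + b' * Real.log A ≤ (b' - b) * T := (div_le_iff₀' (sub_pos.mpr hb)).mp hδT
  rw [div_le_iff₀ (neg_pos.mpr hAδ), Real.log_mul hA.ne' hδ.ne']
  nlinarith

theorem residual_setOf_liminf_le {X : Type*} [TopologicalSpace X] (g : X → ℝ → ℝ) (b : ℝ)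
    (hg : ∀ b' > b, ∀ η > 0, Dense {x | ∃ δ ∈ Ioo 0 η, ∀ᶠ y in 𝓝 x, g y δ ≤ b'}) :
    {x | liminf (fun δ => ENNReal.ofReal (g x δ)) (𝓝[>] 0) ≤ ENNReal.ofReal b} ∈ residual X := by
  set ε : ℕ → ℝ := fun n => 1 / (n + 1)
  have hε : ∀ n, 0 < ε n := fun n => Nat.one_div_pos_of_nat
  set G : ℕ → Set X := fun n => {x | ∃ δ ∈ Ioo 0 (ε n), ∀ᶠ y in 𝓝 x, g y δ ≤ b + ε n}
  have hGopen (n : ℕ) : IsOpen (G n) := isOpen_iff_mem_nhds.mpr fun _ ⟨δ, hδ, hx⟩ =>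
    hx.eventually_nhds.mono fun _ hy => ⟨δ, hδ, hy⟩
  have hG : (⋂ n, G n) ∈ residual X := countable_iInter_mem.mpr fun n =>
    residual_of_dense_open (hGopen n) (hg _ (lt_add_of_pos_right b (hε n)) _ (hε n))
  filter_upwards [hG] with x hx
  choose δ hδ hgδ using mem_iInter.mp hx
  have hδ0 : Tendsto δ atTop (𝓝[>] 0) := tendsto_nhdsWithin_iff.mpr
    ⟨squeeze_zero (fun n => (hδ n).1.le) (fun n => (hδ n).2.le)
      tendsto_one_div_add_atTop_nhds_zero_nat, Eventually.of_forall fun n => (hδ n).1⟩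
  have hlim : Tendsto (fun n => ENNReal.ofReal (b + ε n)) atTop (𝓝 (ENNReal.ofReal b)) :=
    ENNReal.tendsto_ofReal (by simpa [ε] using tendsto_one_div_add_atTop_nhds_zero_nat.const_add b)
  refine ge_of_tendsto' hlim fun n => liminf_le_of_frequently_le' (hδ0.frequently ?_)
  refine ((eventually_ge_atTop n).mono fun k hk => ?_).frequently
  exact ENNReal.ofReal_le_ofReal ((hgδ k).self_of_nhds.trans
    (add_le_add_right (Nat.one_div_le_one_div hk) b))

lemma IsBiLipContraction.injective {K : Type*} [MetricSpace K] {φ : K → K}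
    (hφ : IsBiLipContraction φ) : Function.Injective φ := by
  obtain ⟨c, C, hc, -, hb⟩ := hφ
  intro x y hxy
  have h := (hb x y).1
  rw [hxy, dist_self] at h
  exact dist_le_zero.mp (nonpos_of_mul_nonpos_right h hc)

lemma IsBiLipContraction.exists_lipschitzWith {K : Type*} [MetricSpace K] {φ : K → K}
    (hφ : IsBiLipContraction φ) : ∃ C : ℝ≥0, C < 1 ∧ LipschitzWith C φ := by
  obtain ⟨c, C, -, hC, hb⟩ := hφ
  refine ⟨C.toNNReal, Real.toNNReal_lt_one.mpr hC, LipschitzWith.of_dist_le_mul fun x y => ?_⟩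
  exact (hb x y).2.trans (by gcongr; exact Real.le_coe_toNNReal C)

lemma exists_lipschitzWith_forall_of_finite {ι α β : Type*} [Finite ι] [PseudoEMetricSpace α]
    [PseudoEMetricSpace β] {f : ι → α → β} (hf : ∀ i, ∃ C : ℝ≥0, C < 1 ∧ LipschitzWith C (f i)) :
    ∃ C : ℝ≥0, C < 1 ∧ ∀ i, LipschitzWith C (f i) := by
  choose C hC1 hCf using hf
  have := Fintype.ofFinite ι
  refine ⟨Finset.univ.sup C, Finset.sup_lt_iff zero_lt_one |>.mpr fun i _ => hC1 i,
    fun i => (hCf i).weaken (Finset.le_sup (Finset.mem_univ i))⟩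

section Attractor

variable {X : Type*} {N : ℕ} {m : Fin N → ℕ} {S : ∀ i, Fin (m i) → X → X}

lemma levelSets_succ (K₀ : Set X) (ω : ℕ → Fin N) (k : ℕ) :
    levelSets m S K₀ ω (k + 1) = ⋃ j, S (ω 0) j '' levelSets m S K₀ (fun n => ω (n + 1)) k :=
  rfl

lemma levelSets_congr {K₀ : Set X} {ω ω' : ℕ → Fin N} {k : ℕ} (h : ω' ∈ cylinder ω k) :
    levelSets m S K₀ ω' k = levelSets m S K₀ ω k := by
  induction k generalizing ω ω' with
  | zero => rfl
  | succ k ih =>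
    rw [levelSets_succ, levelSets_succ, ih fun i hi => h (i + 1) (Nat.succ_lt_succ hi),
      h 0 k.succ_pos]

lemma levelSets_univ_antitone (ω : ℕ → Fin N) : Antitone (levelSets m S univ ω) := by
  refine antitone_nat_of_succ_le fun k => ?_
  induction k generalizing ω with
  | zero => exact subset_univ _
  | succ k ih => exact iUnion_mono fun j => image_mono (ih _)

lemma image_attractorOf_subset (ω : ℕ → Fin N) (j : Fin (m (ω 0))) :
    S (ω 0) j '' attractorOf m S univ (fun n => ω (n + 1)) ⊆ attractorOf m S univ ω := by
  rintro _ ⟨y, hy, rfl⟩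
  refine mem_iInter.mpr fun k => ?_
  cases k with
  | zero => exact mem_univ _
  | succ k => exact mem_iUnion.mpr ⟨j, mem_image_of_mem _ (mem_iInter.mp hy k)⟩

lemma attractorOf_eq_iUnion_image (hinj : ∀ i j, Function.Injective (S i j)) (ω : ℕ → Fin N) :
    attractorOf m S univ ω = ⋃ j, S (ω 0) j '' attractorOf m S univ (fun n => ω (n + 1)) :=
  calc attractorOf m S univ ω = ⋂ k, levelSets m S univ ω (k + 1) :=
        ((levelSets_univ_antitone ω).iInter_nat_add 1).symm
    _ = ⋃ j, ⋂ k, S (ω 0) j '' levelSets m S univ (fun n => ω (n + 1)) k :=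
        iInter_iUnion_of_antitone fun _ _ _ hkl => image_mono (levelSets_univ_antitone _ hkl)
    _ = ⋃ j, S (ω 0) j '' attractorOf m S univ (fun n => ω (n + 1)) :=
        iUnion_congr fun j => ((hinj _ j).injOn).image_iInter_eq.symm

lemma levelSets_nonempty [Nonempty X] (hm : ∀ i, 0 < m i) (ω : ℕ → Fin N) (k : ℕ) :
    (levelSets m S univ ω k).Nonempty := by
  induction k generalizing ω with
  | zero => exact univ_nonempty
  | succ k ih =>
    obtain ⟨x, hx⟩ := ih fun n => ω (n + 1)
    exact ⟨_, mem_iUnion.mpr ⟨⟨0, hm _⟩, mem_image_of_mem _ hx⟩⟩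

lemma levelSets_isCompact [TopologicalSpace X] [CompactSpace X]
    (hS : ∀ i j, Continuous (S i j)) (ω : ℕ → Fin N) (k : ℕ) :
    IsCompact (levelSets m S univ ω k) := by
  induction k generalizing ω with
  | zero => exact isCompact_univ
  | succ k ih => exact isCompact_iUnion fun j => (ih _).image (hS _ j)

lemma attractorOf_nonempty [TopologicalSpace X] [CompactSpace X] [T2Space X] [Nonempty X]
    (hm : ∀ i, 0 < m i) (hS : ∀ i j, Continuous (S i j)) (ω : ℕ → Fin N) :
    (attractorOf m S univ ω).Nonempty :=
  IsCompact.nonempty_iInter_of_sequence_nonempty_isCompact_isClosed _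
    (fun k => levelSets_univ_antitone ω k.le_succ) (levelSets_nonempty hm ω)
    (levelSets_isCompact hS ω 0) fun k => (levelSets_isCompact hS ω k).isClosed

end Attractor

section MetricAttractor

variable {K : Type*} [MetricSpace K] {N : ℕ} {m : Fin N → ℕ} {S : ∀ i, Fin (m i) → K → K}

lemma exists_dist_le_of_mem_levelSets [BoundedSpace K] {C : ℝ≥0}
    (hS : ∀ i j, LipschitzWith C (S i j)) (hF : ∀ ω, (attractorOf m S univ ω).Nonempty)
    (k : ℕ) (ω : ℕ → Fin N) :
    ∀ x ∈ levelSets m S univ ω k, ∃ y ∈ attractorOf m S univ ω,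
      dist x y ≤ C ^ k * diam (univ : Set K) := by
  induction k generalizing ω with
  | zero =>
    intro x _
    obtain ⟨y, hy⟩ := hF ω
    exact ⟨y, hy, by simpa using dist_le_diam_of_mem (IsBounded.all _) (mem_univ x) (mem_univ y)⟩
  | succ k ih =>
    intro x hx
    obtain ⟨j, z, hz, rfl⟩ := mem_iUnion.mp hx
    obtain ⟨y, hy, hzy⟩ := ih _ z hz
    refine ⟨S (ω 0) j y, image_attractorOf_subset ω j (mem_image_of_mem _ hy), ?_⟩
    calc dist (S (ω 0) j z) (S (ω 0) j y) ≤ C * dist z y := (hS _ j).dist_le_mul z y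
      _ ≤ C * (C ^ k * diam (univ : Set K)) := by gcongr
      _ = C ^ (k + 1) * diam (univ : Set K) := by ring

lemma coverNum_attractorOf_le_of_mem_cylinder [BoundedSpace K] {C : ℝ≥0}
    (hS : ∀ i j, LipschitzWith C (S i j)) (hF : ∀ ω, (attractorOf m S univ ω).Nonempty)
    {ω ω' : ℕ → Fin N} {k : ℕ} (hω' : ω' ∈ cylinder ω k) {δ : ℝ} (hδ : 0 < δ)
    (hk : C ^ k * diam (univ : Set K) < δ) :
    coverNum (attractorOf m S univ ω') (3 * δ) ≤ coverNum (attractorOf m S univ ω) δ := by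
  refine coverNum_le_of_subset_cthickening (fun x hx => ?_) hk hδ
  have hxk : x ∈ levelSets m S univ ω k := levelSets_congr hω' ▸ mem_iInter.mp hx k
  obtain ⟨y, hy, hxy⟩ := exists_dist_le_of_mem_levelSets hS hF k ω x hxk
  exact mem_cthickening_of_dist_le x y _ _ hy hxy

lemma coverNum_attractorOf_le_prod [BoundedSpace K] (hS : ∀ i j, LipschitzWith 1 (S i j))
    (hinj : ∀ i j, Function.Injective (S i j)) (l : ℕ) (ω : ℕ → Fin N) {δ : ℝ} (hδ : 0 < δ) :
    coverNum (attractorOf m S univ ω) (3 ^ l * δ) ≤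
      (∏ i ∈ Finset.range l, m (ω i) : ℕ) *
        coverNum (attractorOf m S univ fun n => ω (n + l)) δ := by
  induction l generalizing ω with
  | zero => simp
  | succ l ih =>
    let σω : ℕ → Fin N := fun n => ω (n + 1)
    calc coverNum (attractorOf m S univ ω) (3 ^ (l + 1) * δ)
        = coverNum (⋃ j, S (ω 0) j '' attractorOf m S univ σω) (3 * (3 ^ l * δ)) := by
          rw [← attractorOf_eq_iUnion_image hinj, pow_succ', mul_assoc]
      _ ≤ ∑ j, coverNum (S (ω 0) j '' attractorOf m S univ σω) (3 * (3 ^ l * δ)) :=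
          coverNum_iUnion_le _ _
      _ ≤ ∑ _j : Fin (m (ω 0)), coverNum (attractorOf m S univ σω) (3 ^ l * δ) :=
          Finset.sum_le_sum fun j _ => coverNum_image_le (hS _ j) (by positivity)
      _ = m (ω 0) * coverNum (attractorOf m S univ σω) (3 ^ l * δ) := by simp
      _ ≤ m (ω 0) * ((∏ i ∈ Finset.range l, m (σω i) : ℕ) *
            coverNum (attractorOf m S univ fun n => σω (n + l)) δ) := by gcongr; exact ih σω
      _ = (∏ i ∈ Finset.range (l + 1), m (ω i) : ℕ) *
            coverNum (attractorOf m S univ fun n => ω (n + (l + 1))) δ := by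
          rw [Finset.prod_range_succ', Nat.cast_mul, mul_assoc, mul_left_comm]
          rfl

end MetricAttractor

noncomputable def coverRatio {K : Type*} [MetricSpace K] (F : Set K) (δ : ℝ) : ℝ :=
  Real.log (coverNum F δ).toReal / -Real.log δ

section Typical

variable {K : Type*} [MetricSpace K] [CompactSpace K] [Nonempty K] {N : ℕ} {m : Fin N → ℕ}
  {S : ∀ i, Fin (m i) → K → K}

theorem dense_setOf_eventually_coverRatio_le (hm : ∀ i, 0 < m i) {C : ℝ≥0} (hC : C < 1)
    (hS : ∀ i j, LipschitzWith C (S i j)) (hinj : ∀ i j, Function.Injective (S i j))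
    {v : ℕ → Fin N} {b b' η : ℝ} (hv : lowerBoxDim (attractorOf m S univ v) < ENNReal.ofReal b)
    (hb : b < b') (hη : 0 < η) :
    Dense {ω | ∃ δ ∈ Ioo 0 η, ∀ᶠ ω' in 𝓝 ω, coverRatio (attractorOf m S univ ω') δ ≤ b'} := by
  have hF : ∀ ω, (attractorOf m S univ ω).Nonempty :=
    attractorOf_nonempty hm fun i j => (hS i j).continuous
  rw [(isTopologicalBasis_cylinders _).dense_iff]
  rintro _ ⟨ω₀, l, rfl⟩ -
  let ω : ℕ → Fin N := fun i => if i < l then ω₀ i else v (i - l)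
  have hωv : (fun n => ω (n + l)) = v := funext fun n => by simp [ω]
  set W : ℕ := ∏ i ∈ Finset.range l, m (ω i)
  have hW : (0 : ℝ) < W := Nat.cast_pos.mpr (Finset.prod_pos fun i _ => hm _)
  have hvfreq : ∃ᶠ δ in 𝓝[>] 0, coverRatio (attractorOf m S univ v) δ ≤ b :=
    (frequently_lt_of_liminf_lt (by isBoundedDefault) hv).mono fun δ hδ =>
      (ENNReal.ofReal_lt_ofReal_iff'.mp hδ).1.le
  obtain ⟨δ, hδv, ⟨hδ, hδη⟩, hlog⟩ := (hvfreq.and_eventually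
    (Filter.Eventually.and (Ioo_mem_nhdsGT (by positivity : 0 < η / 3 ^ (l + 1)))
      (eventually_log_div_neg_log_le hW (by positivity : (0 : ℝ) < 3 ^ (l + 1)) hb))).exists
  obtain ⟨k, hk⟩ : ∃ k, (C : ℝ) ^ k * diam (univ : Set K) < 3 ^ l * δ :=
    (((tendsto_pow_atTop_nhds_zero_of_lt_one C.2 hC).mul_const _).eventually
      (gt_mem_nhds (by simpa using by positivity))).exists
  refine ⟨ω, fun i hi => if_pos hi, 3 ^ (l + 1) * δ,
    ⟨by positivity, (lt_div_iff₀' (by positivity)).mp hδη⟩, ?_⟩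
  filter_upwards [(isOpen_cylinder _ ω k).mem_nhds (self_mem_cylinder ω k)] with ω' hω'
  have hcov : coverNum (attractorOf m S univ ω') (3 ^ (l + 1) * δ) ≤
      W * coverNum (attractorOf m S univ v) δ :=
    calc coverNum (attractorOf m S univ ω') (3 ^ (l + 1) * δ)
        = coverNum (attractorOf m S univ ω') (3 * (3 ^ l * δ)) := by ring_nf
      _ ≤ coverNum (attractorOf m S univ ω) (3 ^ l * δ) :=
        coverNum_attractorOf_le_of_mem_cylinder hS hF hω' (by positivity) hk
      _ ≤ W * coverNum (attractorOf m S univ v) δ := hωv ▸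
        coverNum_attractorOf_le_prod (fun i j => (hS i j).weaken hC.le) hinj l ω hδ
  refine hlog _ _ (coverNum_toReal_pos (hF ω') (by positivity)) ?_ hδv
  have := ENNReal.toReal_mono (ENNReal.mul_ne_top (ENNReal.natCast_ne_top W)
    (coverNum_ne_top _ hδ)) hcov
  rwa [ENNReal.toReal_mul, ENNReal.toReal_natCast] at this

end Typical

theorem typical_lowerBoxDim_eq_inf_general {K : Type*} [MetricSpace K] [CompactSpace K] [Nonempty K]
    {N : ℕ} (m : Fin N → ℕ) (hm : ∀ i, 0 < m i)
    (S : ∀ i, Fin (m i) → K → K) (hS : ∀ i j, IsBiLipContraction (S i j)) :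
    {ω : ℕ → Fin N |
        lowerBoxDim (attractorOf m S Set.univ ω) =
          ⨅ u : ℕ → Fin N, lowerBoxDim (attractorOf m S Set.univ u)} ∈
      residual (ℕ → Fin N) := by
  set I := ⨅ u : ℕ → Fin N, lowerBoxDim (attractorOf m S univ u)
  suffices {ω | lowerBoxDim (attractorOf m S univ ω) ≤ I} ∈ residual (ℕ → Fin N) by
    filter_upwards [this] with ω hω using le_antisymm hω (iInf_le _ ω)
  rcases eq_or_ne I ⊤ with hItop | hItop
  · simp [hItop]
  obtain ⟨C, hC, hSC⟩ := exists_lipschitzWith_forall_of_finite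
    (f := fun p : Σ i, Fin (m i) => S p.1 p.2) fun p => (hS p.1 p.2).exists_lipschitzWith
  rw [← ENNReal.ofReal_toReal hItop]
  refine residual_setOf_liminf_le (fun ω => coverRatio (attractorOf m S univ ω)) I.toReal
    fun b' hb' η hη => ?_
  obtain ⟨b, hIb, hbb'⟩ := exists_between hb'
  obtain ⟨v, hv⟩ := iInf_lt_iff.mp ((ENNReal.lt_ofReal_iff_toReal_lt hItop).mpr hIb)
  exact dense_setOf_eventually_coverRatio_le hm hC (fun i j => hSC ⟨i, j⟩)
    (fun i j => (hS i j).injective) hv hbb' hη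

/-- The typical lower box dimension of the random attractor is infimal. -/
theorem typical_lowerBoxDim_eq_inf {K : Type*} [MetricSpace K] [CompactSpace K] [Nonempty K]
    {N : ℕ} (hN : 0 < N) (m : Fin N → ℕ) (hm : ∀ i, 0 < m i)
    (S : ∀ i, Fin (m i) → K → K) (hS : ∀ i j, IsBiLipContraction (S i j)) :
    {ω : ℕ → Fin N |
        lowerBoxDim (attractorOf m S Set.univ ω) =
          ⨅ u : ℕ → Fin N, lowerBoxDim (attractorOf m S Set.univ u)} ∈
      residual (ℕ → Fin N) :=
  typical_lowerBoxDim_eq_inf_general m hm S hS
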